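/- Let m ≥ 3 and let n be an integer with (3^{m−1} + 1)/2 ≤ n ≤ (3^{m−1} + 1)/2 + 3^{m−2}. Then the number of feasible partitions of n satisfies the recursion t(n) = Σ_{R = ⌈(n−1)/3⌉}^{⌊(2n + 3^{m−2} − 1)/4⌋} t(R) − Σ_{R = ⌈(3n+2)/5⌉}^{⌊(2n + 3^{m−2} − 1)/4⌋} Σ_{S = ⌈(R−1)/3⌉}^{2R − n − 1} t(S), where empty sums are 0. -/

import Mathlib

/-- `w : Fin m → ℕ` (1-indexed as `w_1 ≤ … ≤ w_m` in the paper) is a weighing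
sequence for `n`: a nondecreasing list of `m` positive integers summing to `n`
such that every integer `1 ≤ k ≤ n` can be written as
`k = u_1 w_1 + … + u_m w_m` with each `u_i ∈ {-1, 0, 1}`. -/
def IsWeighingSeq (n m : ℕ) (w : Fin m → ℕ) : Prop :=
  (∀ i, 0 < w i) ∧ Monotone w ∧ (∑ i, w i) = n ∧
  ∀ k : ℤ, 1 ≤ k → k ≤ (n : ℤ) →
    ∃ u : Fin m → ℤ, (∀ i, u i = -1 ∨ u i = 0 ∨ u i = 1) ∧
      k = ∑ i, u i * (w i : ℤ)

/-- A feasible partition of `n`: a weighing sequence for `n` of minimal length. -/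
def IsFeasible (n m : ℕ) (w : Fin m → ℕ) : Prop :=
  IsWeighingSeq n m w ∧
    ∀ (m' : ℕ) (w' : Fin m' → ℕ), IsWeighingSeq n m' w' → m ≤ m'

/-- `t n` is the number of feasible partitions of `n` (note `t 0 = 1`, the empty
partition being the unique feasible partition of `0`). -/
noncomputable def t (n : ℕ) : ℕ :=
  Nat.card {p : (m : ℕ) × (Fin m → ℕ) // IsFeasible n p.1 p.2}

/-!
A nondecreasing sequence of positive integers is a weighing sequence exactly when every part is
at most twice the sum of the preceding parts plus one. Hence a weighing sequence for `n` of length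
`q` needs `2n + 1 ≤ 3^q`, a greedy construction attains this bound, and the feasible partitions of
`n` are the weighing sequences of the least such length `q`.

Removing the largest part `n - R` of a feasible partition of `n` leaves a weighing sequence for
`R` with parts at most `n - R`, and in the first span its length is automatically the feasible
length for `R`. So these are the `t R` feasible partitions of `R` minus those whose largest part
`R - S` exceeds `n - R`; removing that part leaves an arbitrary feasible partition of `S`, which
gives the double sum.
-/

open Finset

def Weighs {m : ℕ} (w : Fin m → ℕ) (k : ℤ) : Prop :=
  ∃ u : Fin m → ℤ, (∀ i, u i = -1 ∨ u i = 0 ∨ u i = 1) ∧ k = ∑ i, u i * (w i : ℤ)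

theorem weighs_zero {m : ℕ} (w : Fin m → ℕ) : Weighs w 0 :=
  ⟨0, fun _ => Or.inr (Or.inl rfl), by simp⟩

theorem Weighs.snoc {m : ℕ} {v : Fin m → ℕ} {k k' c : ℤ} (h : Weighs v k')
    (hc : c = -1 ∨ c = 0 ∨ c = 1) (x : ℕ) (hk : k = k' + c * x) :
    Weighs (Fin.snoc v x : Fin (m + 1) → ℕ) k := by
  obtain ⟨u, hu, rfl⟩ := h
  exact ⟨Fin.snoc u c, Fin.forall_fin_succ'.2 ⟨by simpa using hu, by simpa using hc⟩,
    by simp [Fin.sum_univ_castSucc, hk]⟩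

theorem sum_Iio_castSucc_snoc {p : ℕ} (v : Fin p → ℕ) (x : ℕ) (j : Fin p) :
    ∑ i ∈ Iio j.castSucc, (Fin.snoc v x : Fin (p + 1) → ℕ) i = ∑ i ∈ Iio j, v i := by
  simp [← Fin.map_castSuccEmb_Iio, sum_map]

theorem sum_Iio_last_snoc {p : ℕ} (v : Fin p → ℕ) (x : ℕ) :
    ∑ i ∈ Iio (Fin.last p), (Fin.snoc v x : Fin (p + 1) → ℕ) i = ∑ i, v i := by
  simp [Fin.Iio_last_eq_map, sum_map]

theorem snoc_le_two_mul_sum_Iio_add_one_iff {p : ℕ} (v : Fin p → ℕ) (x : ℕ) :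
    (∀ j, (Fin.snoc v x : Fin (p + 1) → ℕ) j ≤
        2 * ∑ i ∈ Iio j, (Fin.snoc v x : Fin (p + 1) → ℕ) i + 1) ↔
      (∀ j, v j ≤ 2 * ∑ i ∈ Iio j, v i + 1) ∧ x ≤ 2 * ∑ i, v i + 1 := by
  simp [Fin.forall_fin_succ', sum_Iio_castSucc_snoc]

theorem weighs_of_le_two_mul_sum_Iio_add_one {p : ℕ} {w : Fin p → ℕ}
    (hw : ∀ j, w j ≤ 2 * ∑ i ∈ Iio j, w i + 1) {k : ℤ} (hk : |k| ≤ ∑ i, w i) : Weighs w k := by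
  induction p generalizing k with
  | zero => simp_all [weighs_zero]
  | succ p ih =>
    rw [← Fin.snoc_init_self w] at hw hk ⊢
    rw [snoc_le_two_mul_sum_Iio_add_one_iff] at hw
    rw [Fin.sum_univ_castSucc] at hk
    simp only [Fin.snoc_castSucc, Fin.snoc_last] at hk
    set x := w (Fin.last p)
    set S := ∑ i, Fin.init w i
    obtain ⟨hv, hx⟩ := hw
    rw [abs_le] at hk
    by_cases hlarge : (S : ℤ) < k
    · exact (ih hv (k := k - x) (by rw [abs_le]; omega)).snoc (c := 1) (by simp) x (by ring)
    by_cases hsmall : k < -(S : ℤ)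
    · exact (ih hv (k := k + x) (by rw [abs_le]; omega)).snoc (c := -1) (by simp) x (by ring)
    exact (ih hv (k := k) (by rw [abs_le]; omega)).snoc (c := 0) (by simp) x (by ring)

theorem IsWeighingSeq.le_two_mul_sum_Iio_add_one {n m : ℕ} {w : Fin m → ℕ}
    (h : IsWeighingSeq n m w) (j : Fin m) : w j ≤ 2 * ∑ i ∈ Iio j, w i + 1 := by
  obtain ⟨-, hmono, hsum, hweighs⟩ := h
  set S := ∑ i ∈ Iio j, w i
  by_contra! hj
  have hSn : S + w j ≤ n := by
    rw [← hsum, add_comm, ← sum_insert notMem_Iio_self]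
    exact sum_le_sum_of_subset (subset_univ _)
  -- Weighing `n - (2S + 1)` writes `2S + 1` as `∑ (1 - u i) w i` with coefficients in `{0, 1, 2}`:
  -- as `2S + 1 < w j`, no part from `j` on can occur, and the parts below `j` give at most `2S`.
  obtain ⟨u, hu, hk⟩ := hweighs (n - (2 * S + 1)) (by omega) (by omega)
  have hrepr : (2 * S + 1 : ℤ) = ∑ i, (1 - u i) * w i := by
    simp only [sub_mul, one_mul, sum_sub_distrib, ← hk, ← hsum]
    push_cast
    ring
  have hcoeff : ∀ i, 0 ≤ 1 - u i ∧ 1 - u i ≤ 2 := fun i => by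
    rcases hu i with h | h | h <;> simp [h]
  by_cases htail : ∀ i, j ≤ i → u i = 1
  · have hle : ∑ i, (1 - u i) * (w i : ℤ) ≤ ∑ i, if i < j then 2 * (w i : ℤ) else 0 := by
      refine sum_le_sum fun i _ => ?_
      split_ifs with hij
      · exact mul_le_mul_of_nonneg_right (hcoeff i).2 (Int.natCast_nonneg _)
      · simp [htail i (not_lt.1 hij)]
    rw [sum_ite, sum_const_zero, add_zero, ← mul_sum, filter_gt_eq_Iio] at hle
    push_cast [S] at hrepr
    linarith
  · push Not at htail
    obtain ⟨i, hji, hui⟩ := htail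
    have hwi : (w i : ℤ) ≤ (1 - u i) * w i :=
      le_mul_of_one_le_left (Int.natCast_nonneg _) (by rcases hu i with h | h | h <;> simp_all)
    have hsingle : (1 - u i) * (w i : ℤ) ≤ ∑ i, (1 - u i) * w i :=
      single_le_sum (fun i _ => mul_nonneg (hcoeff i).1 (Int.natCast_nonneg _)) (mem_univ i)
    have hmono' : (w j : ℤ) ≤ w i := by exact_mod_cast hmono hji
    linarith

theorem isWeighingSeq_iff {n m : ℕ} {w : Fin m → ℕ} : IsWeighingSeq n m w ↔
    (∀ i, 0 < w i) ∧ Monotone w ∧ ∑ i, w i = n ∧ ∀ j, w j ≤ 2 * ∑ i ∈ Iio j, w i + 1 := by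
  refine ⟨fun h => ⟨h.1, h.2.1, h.2.2.1, h.le_two_mul_sum_Iio_add_one⟩, ?_⟩
  rintro ⟨hpos, hmono, rfl, hgrowth⟩
  exact ⟨hpos, hmono, rfl, fun k hk1 hk2 =>
    weighs_of_le_two_mul_sum_Iio_add_one hgrowth (by rw [abs_le]; omega)⟩

theorem monotone_snoc_iff {p : ℕ} (v : Fin p → ℕ) (x : ℕ) :
    Monotone (Fin.snoc v x : Fin (p + 1) → ℕ) ↔ Monotone v ∧ ∀ i, v i ≤ x := by
  refine ⟨fun h => ⟨fun a b hab => by simpa using h (Fin.castSucc_le_castSucc_iff.2 hab),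
    fun i => by simpa using h (Fin.le_last i.castSucc)⟩, fun ⟨hv, hx⟩ a b hab => ?_⟩
  rcases Fin.eq_castSucc_or_eq_last b with ⟨b, rfl⟩ | rfl
  · obtain ⟨a, rfl⟩ :=
      Fin.exists_castSucc_eq.2 (Fin.ne_last_of_lt (hab.trans_lt (Fin.castSucc_lt_last b)))
    simpa using hv (Fin.castSucc_le_castSucc_iff.1 hab)
  · rcases Fin.eq_castSucc_or_eq_last a with ⟨a, rfl⟩ | rfl <;> simp [hx]

theorem isWeighingSeq_snoc_iff {n p : ℕ} (v : Fin p → ℕ) (x : ℕ) :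
    IsWeighingSeq n (p + 1) (Fin.snoc v x) ↔ IsWeighingSeq (∑ i, v i) p v ∧ 0 < x ∧
      (∀ i, v i ≤ x) ∧ x ≤ 2 * ∑ i, v i + 1 ∧ ∑ i, v i + x = n := by
  simp only [isWeighingSeq_iff, Fin.forall_fin_succ', Fin.snoc_castSucc, Fin.snoc_last,
    monotone_snoc_iff, sum_Iio_castSucc_snoc, sum_Iio_last_snoc, Fin.sum_univ_castSucc]
  tauto

theorem three_pow_mod_two (p : ℕ) : 3 ^ p % 2 = 1 :=
  Nat.odd_iff.1 (Odd.pow (by decide))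

theorem IsWeighingSeq.two_mul_add_one_le_three_pow {n p : ℕ} {w : Fin p → ℕ}
    (h : IsWeighingSeq n p w) : 2 * n + 1 ≤ 3 ^ p := by
  induction p generalizing n with
  | zero => obtain ⟨-, -, rfl, -⟩ := h; simp
  | succ p ih =>
    rw [← Fin.snoc_init_self w, isWeighingSeq_snoc_iff] at h
    obtain ⟨hv, -, -, hx, rfl⟩ := h
    have := ih hv
    rw [pow_succ]
    omega

theorem IsWeighingSeq.three_mul_le {n p : ℕ} {w : Fin p → ℕ} (h : IsWeighingSeq n p w)
    (i : Fin p) : 3 * w i ≤ 2 * n + 1 := by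
  cases p with
  | zero => exact i.elim0
  | succ p =>
    have hi : w i ≤ w (Fin.last p) := h.2.1 (Fin.le_last i)
    rw [← Fin.snoc_init_self w, isWeighingSeq_snoc_iff] at h
    omega

theorem exists_isWeighingSeq {q n : ℕ} (h1 : 3 ^ q < 2 * n + 1) (h2 : 2 * n + 1 ≤ 3 ^ (q + 1)) :
    ∃ w : Fin (q + 1) → ℕ, IsWeighingSeq n (q + 1) w := by
  induction q generalizing n with
  | zero =>
    obtain rfl : n = 1 := by simp at h1 h2; omega
    exact ⟨fun _ => 1, isWeighingSeq_iff.2 ⟨by simp, monotone_const, by simp, by simp⟩⟩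
  | succ q ih =>
    have hodd := three_pow_mod_two q
    rw [pow_succ] at h1 ih
    rw [pow_succ, pow_succ] at h2
    -- `R` is the least remainder allowed by `n - R ≤ 2R + 1` and by the length `q + 1` it must
    -- still need, so that `n - R` can serve as the largest part.
    set R := max ((3 ^ q + 1) / 2) ((n + 1) / 3)
    obtain ⟨v, hv⟩ := ih (n := R) (by omega) (by omega)
    have hvsum : ∑ i, v i = R := hv.2.2.1
    refine ⟨Fin.snoc v (n - R), (isWeighingSeq_snoc_iff v _).2 ?_⟩
    rw [hvsum]
    refine ⟨hv, by omega, fun i => ?_, by omega, by omega⟩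
    have := hv.three_mul_le i
    omega

theorem isFeasible_iff {n m : ℕ} {w : Fin m → ℕ} (hn : 1 ≤ n) :
    IsFeasible n m w ↔ IsWeighingSeq n m w ∧ 3 ^ (m - 1) < 2 * n + 1 := by
  refine ⟨fun ⟨hw, hmin⟩ => ⟨hw, ?_⟩, fun ⟨hw, hm⟩ => ⟨hw, fun m' w' hw' => ?_⟩⟩
  · have hq1 : 3 ^ Nat.log 3 (2 * n) ≤ 2 * n := Nat.pow_log_le_self 3 (by omega)
    have hq2 : 2 * n < 3 ^ (Nat.log 3 (2 * n) + 1) := Nat.lt_pow_succ_log_self (by norm_num) _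
    obtain ⟨w', hw'⟩ :=
      exists_isWeighingSeq (q := Nat.log 3 (2 * n)) (n := n) (by omega) (by omega)
    have hmq := hmin _ _ hw'
    calc 3 ^ (m - 1) ≤ 3 ^ Nat.log 3 (2 * n) := Nat.pow_le_pow_right (by norm_num) (by omega)
      _ < 2 * n + 1 := by omega
  · by_contra! hm'
    have := hw'.two_mul_add_one_le_three_pow
    have : 3 ^ m' ≤ 3 ^ (m - 1) := Nat.pow_le_pow_right (by norm_num) (by omega)
    omega

noncomputable def weighingCount (p n a : ℕ) : ℕ :=
  Nat.card {w : Fin p → ℕ // IsWeighingSeq n p w ∧ ∀ i, w i ≤ a}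

instance (p n a : ℕ) : Finite {w : Fin p → ℕ // IsWeighingSeq n p w ∧ ∀ i, w i ≤ a} :=
  Set.Finite.to_subtype <| (Set.Finite.pi fun _ => Set.finite_Iic a).subset
    fun _ hw i _ => Set.mem_Iic.2 (hw.2 i)

theorem t_eq_weighingCount {n q : ℕ} (a : ℕ) (hn : 1 ≤ n) (hq1 : 3 ^ (q - 1) < 2 * n + 1)
    (hq2 : 2 * n + 1 ≤ 3 ^ q) (ha : 2 * n + 1 ≤ 3 * a) : t n = weighingCount q n a := by
  rw [t, weighingCount]
  symm
  refine Nat.card_eq_of_bijective (fun w => ⟨⟨q, w.1⟩, (isFeasible_iff hn).2 ⟨w.2.1, hq1⟩⟩)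
    ⟨fun w w' h => by simpa [Subtype.ext_iff] using h, ?_⟩
  rintro ⟨⟨m, w⟩, hw⟩
  obtain ⟨hw, hm⟩ := (isFeasible_iff hn).1 hw
  dsimp only at hw hm
  have hmq : m - 1 < q := (Nat.pow_lt_pow_iff_right (by norm_num)).1 (hm.trans_le hq2)
  have hqm : q - 1 < m :=
    (Nat.pow_lt_pow_iff_right (by norm_num)).1 (hq1.trans_le hw.two_mul_add_one_le_three_pow)
  obtain rfl : m = q := by omega
  exact ⟨⟨w, hw, fun i => by have := hw.three_mul_le i; omega⟩, rfl⟩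

theorem weighingCount_succ {p R : ℕ} (a : ℕ) (hR : 1 ≤ R) :
    weighingCount (p + 1) R a =
      ∑ S ∈ Icc (max ((R + 1) / 3) (R - a)) (R - 1), weighingCount p S (R - S) := by
  set I := Icc (max ((R + 1) / 3) (R - a)) (R - 1)
  have hsnoc : ∀ S ∈ I, ∀ v : Fin p → ℕ, IsWeighingSeq S p v ∧ (∀ i, v i ≤ R - S) →
      IsWeighingSeq R (p + 1) (Fin.snoc v (R - S)) ∧
        ∀ i, (Fin.snoc v (R - S) : Fin (p + 1) → ℕ) i ≤ a := by
    rintro S hS v ⟨hv, hva⟩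
    rw [mem_Icc, max_le_iff] at hS
    have hvsum : ∑ i, v i = S := hv.2.2.1
    refine ⟨(isWeighingSeq_snoc_iff v _).2 ⟨hvsum ▸ hv, by omega, hva, by omega, by omega⟩,
      Fin.forall_fin_succ'.2 ⟨fun i => ?_, by simp; omega⟩⟩
    simpa using (hva i).trans (by omega)
  unfold weighingCount
  rw [← sum_coe_sort, ← Nat.card_sigma]
  symm
  refine Nat.card_eq_of_bijective
    (fun q => ⟨Fin.snoc q.2.1 (R - q.1), hsnoc q.1 q.1.2 q.2.1 q.2.2⟩) ⟨?_, ?_⟩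
  · rintro ⟨⟨S, hS⟩, v, hv⟩ ⟨⟨S', hS'⟩, v', hv'⟩ h
    simp only [Subtype.mk.injEq, Fin.snoc_inj] at h
    obtain ⟨rfl, hx⟩ := h
    obtain rfl : S = S' := by simp only [I, mem_Icc] at hS hS'; omega
    rfl
  · rintro ⟨w, hw, hwa⟩
    have hxa := hwa (Fin.last p)
    rw [← Fin.snoc_init_self w, isWeighingSeq_snoc_iff] at hw
    obtain ⟨hv, hx, hvx, hx2, hsum⟩ := hw
    have hS : R - w (Fin.last p) = ∑ i, Fin.init w i := by omega
    have hRx : R - (R - w (Fin.last p)) = w (Fin.last p) := by omega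
    refine ⟨⟨⟨R - w (Fin.last p), by simp only [I, mem_Icc]; omega⟩, Fin.init w,
      by dsimp only; rwa [hS], by dsimp only; rwa [hRx]⟩, ?_⟩
    simp only [hRx, Fin.snoc_init_self]

theorem weighingCount_succ_eq_zero {p R a : ℕ} (h : 3 ^ p + 2 * a < 2 * R + 1) :
    weighingCount (p + 1) R a = 0 := by
  rw [weighingCount, Nat.card_eq_zero]
  refine Or.inl ⟨fun ⟨w, hw, hwa⟩ => ?_⟩
  have hxa := hwa (Fin.last p)
  rw [← Fin.snoc_init_self w, isWeighingSeq_snoc_iff] at hw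
  have := hw.1.two_mul_add_one_le_three_pow
  omega

section FirstSpan

variable {p n : ℕ} (hp : 1 ≤ p) (hn1 : 3 * 3 ^ p + 1 ≤ 2 * n) (hn2 : 2 * n ≤ 5 * 3 ^ p + 1)
include hp hn1 hn2

theorem weighingCount_add_sum_t_eq_t {R : ℕ} (hR1 : (n + 1) / 3 ≤ R)
    (hR2 : R ≤ (2 * n + 3 ^ p - 1) / 4) :
    weighingCount (p + 1) R (n - R) + ∑ S ∈ Icc ((R + 1) / 3) (2 * R - n - 1), t S = t R := by
  have hodd := three_pow_mod_two p
  have hpow : 3 * 3 ^ (p - 1) = 3 ^ p := by rw [← pow_succ']; congr 1; omega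
  have htS : ∀ S ∈ Icc ((R + 1) / 3) (2 * R - n - 1), t S = weighingCount p S (R - S) := by
    intro S hS
    rw [mem_Icc] at hS
    exact t_eq_weighingCount _ (by omega) (by omega) (by omega) (by omega)
  -- A weighing sequence for `R` either has all parts at most `n - R`, or its last part is
  -- `R - S` with `S < 2R - n`, preceded by an arbitrary feasible partition of `S`.
  have hsplit : Icc (max ((R + 1) / 3) (R - R)) (R - 1) =
      Icc (max ((R + 1) / 3) (R - (n - R))) (R - 1) ∪ Icc ((R + 1) / 3) (2 * R - n - 1) := by
    ext S
    simp only [mem_Icc, mem_union]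
    omega
  have hdisj : Disjoint (Icc (max ((R + 1) / 3) (R - (n - R))) (R - 1))
      (Icc ((R + 1) / 3) (2 * R - n - 1)) := by
    rw [disjoint_left]
    intro S hS hS'
    rw [mem_Icc] at hS hS'
    omega
  rw [sum_congr rfl htS, weighingCount_succ _ (by omega),
    t_eq_weighingCount R (q := p + 1) (by omega) (by rw [Nat.add_sub_cancel]; omega)
      (by rw [pow_succ]; omega) (by omega),
    weighingCount_succ _ (by omega), hsplit, sum_union hdisj]

theorem t_add_sum_sum_t_eq_sum_t :
    t n + ∑ R ∈ Icc ((n + 1) / 3) ((2 * n + 3 ^ p - 1) / 4),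
        ∑ S ∈ Icc ((R + 1) / 3) (2 * R - n - 1), t S =
      ∑ R ∈ Icc ((n + 1) / 3) ((2 * n + 3 ^ p - 1) / 4), t R := by
  have htn : t n = ∑ R ∈ Icc ((n + 1) / 3) ((2 * n + 3 ^ p - 1) / 4),
      weighingCount (p + 1) R (n - R) := by
    have hpos : 0 < 3 ^ p := by positivity
    rw [t_eq_weighingCount n (q := p + 2) (by omega)
      (by rw [show p + 2 - 1 = p + 1 from rfl, pow_succ]; omega)
      (by rw [pow_succ, pow_succ]; omega) (by omega), weighingCount_succ _ (by omega)]
    refine (sum_subset (Icc_subset_Icc (by omega) (by omega)) fun R hR hR' => ?_).symm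
    rw [mem_Icc] at hR hR'
    exact weighingCount_succ_eq_zero (by omega)
  rw [htn, ← sum_add_distrib]
  exact sum_congr rfl fun R hR =>
    weighingCount_add_sum_t_eq_t hp hn1 hn2 (mem_Icc.1 hR).1 (mem_Icc.1 hR).2

end FirstSpan

/-- The ceilings of the paper appear as `⌈(n-1)/3⌉ = (n+1)/3`, `⌈(3n+2)/5⌉ = (3n+6)/5` and
`⌈(R-1)/3⌉ = (R+1)/3`; the identity is cast to `ℤ` so that the subtraction is not truncated. -/
theorem t_recursion_lower_span (m n : ℕ) (hm : 3 ≤ m)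
    (h1 : 3 ^ (m - 1) + 1 ≤ 2 * n) (h2 : 2 * n ≤ 3 ^ (m - 1) + 1 + 2 * 3 ^ (m - 2)) :
    (t n : ℤ) =
      (∑ R ∈ Finset.Icc ((n + 1) / 3) ((2 * n + 3 ^ (m - 2) - 1) / 4), (t R : ℤ)) -
        ∑ R ∈ Finset.Icc ((3 * n + 6) / 5) ((2 * n + 3 ^ (m - 2) - 1) / 4),
          ∑ S ∈ Finset.Icc ((R + 1) / 3) (2 * R - n - 1), (t S : ℤ) := by
  obtain ⟨p, rfl⟩ : ∃ p, m = p + 2 := ⟨m - 2, by omega⟩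
  simp only [show p + 2 - 1 = p + 1 from rfl, Nat.add_sub_cancel, pow_succ] at h1 h2 ⊢
  have hK : 3 ≤ 3 ^ p := Nat.le_self_pow (by omega) 3
  have hsum := t_add_sum_sum_t_eq_sum_t (p := p) (n := n) (by omega) (by omega) (by omega)
  have hshrink : ∑ R ∈ Icc ((3 * n + 6) / 5) ((2 * n + 3 ^ p - 1) / 4),
      ∑ S ∈ Icc ((R + 1) / 3) (2 * R - n - 1), t S =
      ∑ R ∈ Icc ((n + 1) / 3) ((2 * n + 3 ^ p - 1) / 4),
        ∑ S ∈ Icc ((R + 1) / 3) (2 * R - n - 1), t S := by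
    refine sum_subset (Icc_subset_Icc_left (by omega)) fun R hR hR' => ?_
    rw [mem_Icc] at hR hR'
    rw [Icc_eq_empty (by omega), sum_empty]
  rw [← hshrink] at hsum
  rw [eq_sub_iff_add_eq]
  exact_mod_cast hsum
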